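/- For odd j with 1 ≤ j ≤ d−1 and m > 0: (1 − j/d)^{2m(j+1)} (1 − (j+1)/d)^{2m(d−j−1)} C(d−1, j) ≤ (1 − j/d)^{2md} · d^j/j! ≤ e^{−2mj + j log d}/j!. In particular, with m = (log d + c)/2, each such term is at most e^{−cj}/j!. -/

import Mathlib

open Real

/-- The term of `Σ_II` indexed by odd `j`, with `2m` in the exponents. -/
noncomputable def sigmaIITerm (d j : ℕ) (m : ℝ) : ℝ :=
  (1 - (j : ℝ) / d) ^ (2 * m * ((j : ℝ) + 1)) *
    (1 - ((j : ℝ) + 1) / d) ^ (2 * m * ((d : ℝ) - j - 1)) * (Nat.choose (d - 1) j : ℝ)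

/-!
Since `1 - (j+1)/d ≤ 1 - j/d`, the two power factors of the term together are at most
`(1 - j/d)^(2md)`, and `C(d-1, j) ≤ d^j / j!`. Then `1 - x ≤ e^{-x}` turns `(1 - j/d)^(2md)` into
`e^{-2mj}`, and `d^j = e^{j log d}`; for `m = (log d + c)/2` the exponent collapses to `-cj`.
-/

lemma Real.rpow_mul_rpow_le_rpow_add {a b p q : ℝ} (ha : 0 < a) (hb : 0 ≤ b) (hba : b ≤ a)
    (hq : 0 ≤ q) : a ^ p * b ^ q ≤ a ^ (p + q) := by
  rw [rpow_add ha]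
  gcongr

lemma Nat.cast_choose_pred_le_pow_div_factorial (d j : ℕ) :
    ((d - 1).choose j : ℝ) ≤ (d : ℝ) ^ j / j.factorial :=
  calc ((d - 1).choose j : ℝ) ≤ ((d - 1 : ℕ) : ℝ) ^ j / j.factorial := Nat.choose_le_pow_div j _
    _ ≤ (d : ℝ) ^ j / j.factorial := by gcongr; exact_mod_cast d.sub_le 1

lemma Real.one_sub_div_rpow_mul_le_exp {a d t : ℝ} (hd : 0 < d) (had : a ≤ d) (ht : 0 ≤ t) :
    (1 - a / d) ^ (t * d) ≤ exp (-(t * a)) :=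
  calc (1 - a / d) ^ (t * d) ≤ exp (-(a / d)) ^ (t * d) := by
        gcongr
        · rwa [sub_nonneg, div_le_one hd]
        · exact one_sub_le_exp_neg _
    _ = exp (-(t * a)) := by
        rw [← exp_mul]
        field_simp

lemma sigmaIITerm_le {d j : ℕ} (hjd : j + 1 ≤ d) {m : ℝ} (hm : 0 ≤ m) :
    sigmaIITerm d j m ≤ (1 - (j : ℝ) / d) ^ (2 * m * d) * (d : ℝ) ^ j / j.factorial := by
  have hd : (0 : ℝ) < d := by exact_mod_cast j.succ_pos.trans_le hjd
  have hjdR : (j : ℝ) + 1 ≤ d := by exact_mod_cast hjd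
  have hbase : 0 < 1 - (j : ℝ) / d := by rw [sub_pos, div_lt_one hd]; linarith
  have hpowers : (1 - (j : ℝ) / d) ^ (2 * m * ((j : ℝ) + 1)) *
      (1 - ((j : ℝ) + 1) / d) ^ (2 * m * ((d : ℝ) - j - 1)) ≤ (1 - (j : ℝ) / d) ^ (2 * m * d) :=
    calc _ ≤ (1 - (j : ℝ) / d) ^ (2 * m * ((j : ℝ) + 1) + 2 * m * ((d : ℝ) - j - 1)) := by
          refine rpow_mul_rpow_le_rpow_add hbase ?_ (by gcongr; linarith) ?_
          · rw [sub_nonneg, div_le_one hd]; exact hjdR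
          · have : (0 : ℝ) ≤ d - j - 1 := by linarith
            positivity
      _ = (1 - (j : ℝ) / d) ^ (2 * m * d) := by ring_nf
  rw [sigmaIITerm, mul_div_assoc]
  exact mul_le_mul hpowers (Nat.cast_choose_pred_le_pow_div_factorial d j) (by positivity)
    (rpow_nonneg hbase.le _)

lemma one_sub_div_rpow_mul_pow_div_le_exp {d j : ℕ} (hjd : j ≤ d) (hd : 0 < d) {m : ℝ}
    (hm : 0 ≤ m) :
    (1 - (j : ℝ) / d) ^ (2 * m * d) * (d : ℝ) ^ j / j.factorial ≤
      exp (-(2 * m * j) + j * log d) / j.factorial := by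
  have hdR : (0 : ℝ) < d := by exact_mod_cast hd
  rw [exp_add, exp_nat_mul, exp_log hdR]
  gcongr
  exact one_sub_div_rpow_mul_le_exp hdR (by exact_mod_cast hjd) (by positivity)

theorem sigmaII_bound_general (d j : ℕ) (hj1 : 1 ≤ j) (hj2 : j ≤ d - 1) :
    (∀ m : ℝ, 0 < m →
      sigmaIITerm d j m ≤ (1 - (j : ℝ) / d) ^ (2 * m * d) * (d : ℝ) ^ j / (Nat.factorial j) ∧
      (1 - (j : ℝ) / d) ^ (2 * m * d) * (d : ℝ) ^ j / (Nat.factorial j) ≤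
        Real.exp (-(2 * m * j) + j * Real.log d) / (Nat.factorial j)) ∧
    (∀ c : ℝ, 0 < c →
      sigmaIITerm d j ((Real.log d + c) / 2) ≤ Real.exp (-(c * j)) / (Nat.factorial j)) := by
  have hjd : j + 1 ≤ d := by omega
  have hbounds (m : ℝ) (hm : 0 < m) :=
    And.intro (sigmaIITerm_le hjd hm.le)
      (one_sub_div_rpow_mul_pow_div_le_exp (Nat.le_of_succ_le hjd) (j.succ_pos.trans_le hjd) hm.le)
  refine ⟨hbounds, fun c hc => ?_⟩
  have hm : 0 < (log d + c) / 2 := by linarith [log_natCast_nonneg d]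
  obtain ⟨hterm, hexp⟩ := hbounds _ hm
  calc sigmaIITerm d j ((log d + c) / 2)
      ≤ exp (-(2 * ((log d + c) / 2) * j) + j * log d) / j.factorial := hterm.trans hexp
    _ = exp (-(c * j)) / j.factorial := by ring_nf

theorem sigmaII_bound (d j : ℕ) (hj : Odd j) (hj1 : 1 ≤ j) (hj2 : j ≤ d - 1) :
    (∀ m : ℝ, 0 < m →
      sigmaIITerm d j m ≤ (1 - (j : ℝ) / d) ^ (2 * m * d) * (d : ℝ) ^ j / (Nat.factorial j) ∧
      (1 - (j : ℝ) / d) ^ (2 * m * d) * (d : ℝ) ^ j / (Nat.factorial j) ≤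
        Real.exp (-(2 * m * j) + j * Real.log d) / (Nat.factorial j)) ∧
    (∀ c : ℝ, 0 < c →
      sigmaIITerm d j ((Real.log d + c) / 2) ≤ Real.exp (-(c * j)) / (Nat.factorial j)) :=
  sigmaII_bound_general d j hj1 hj2
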